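/- Let R be a commutative ℚ-algebra with derivation δ, let g ∈ R, ε ≥ 1, and k ≥ 0. If g^ε lies in an ideal J ⊆ R, then each δ^j g for 0 ≤ j ≤ k lies in the radical of the ideal generated by the elements δ^m(h) for h a generator of J and 0 ≤ m ≤ kε. In particular, if g^ε ∈ J then δ^j g ∈ √(J + δJ + ⋯ + δ^{kε}J) for all 0 ≤ j ≤ k. -/

import Mathlib

/-!
Induct on `j`. Once `δ^i g` lies in the radical ideal `P` for all `i < j`, the general Leibniz
rule shows that modulo `P` the derivative `δ^(jε) (g^ε)` is a positive integer multiple of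
`(δ^j g)^ε`: every other term of the expansion contains a factor `δ^i g` with `i < j`. The left
side lies in `P` by hypothesis, the integer is invertible over `ℚ`, and `P` is radical.
-/

open Finset

namespace Derivation

section CommSemiring

variable {R A : Type*} [CommSemiring R] [CommSemiring A] [Algebra R A]

theorem iterate_apply_mul (D : Derivation R A A) (n : ℕ) (a b : A) :
    D^[n] (a * b) = ∑ ij ∈ antidiagonal n, n.choose ij.1 • (D^[ij.1] a * D^[ij.2] b) := by
  induction n with
  | zero => simp
  | succ n ih =>
    rw [sum_antidiagonal_choose_succ_nsmul (fun i j => D^[i] a * D^[j] b) n]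
    simp only [Function.iterate_succ_apply', ih, map_sum, map_nsmul, leibniz, smul_eq_mul,
      nsmul_add, sum_add_distrib]
    congr 1
    refine sum_congr rfl fun ij hij => ?_
    rw [n.choose_symm_of_eq_add (mem_antidiagonal.1 hij).symm, mul_comm]

end CommSemiring

section CommRing

variable {R A : Type*} [CommSemiring R] [CommRing A] [Algebra R A] (D : Derivation R A A)
  {P : Ideal A} {a b : A} {p q : ℕ}

theorem choose_smul_iterate_mul_mem (ha : ∀ i < p, D^[i] a ∈ P) (hb : ∀ l < q, D^[l] b ∈ P)
    (n : ℕ) {i l : ℕ} (h : i < p ∨ l < q) : n.choose i • (D^[i] a * D^[l] b) ∈ P := by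
  rcases h with hi | hl
  · exact P.nsmul_mem (P.mul_mem_right _ (ha i hi)) _
  · exact P.nsmul_mem (P.mul_mem_left _ (hb l hl)) _

theorem iterate_apply_mul_mem (ha : ∀ i < p, D^[i] a ∈ P) (hb : ∀ l < q, D^[l] b ∈ P)
    {n : ℕ} (hn : n < p + q) : D^[n] (a * b) ∈ P := by
  rw [iterate_apply_mul]
  refine P.sum_mem fun ij hij => D.choose_smul_iterate_mul_mem ha hb n ?_
  have := mem_antidiagonal.1 hij
  omega

theorem iterate_apply_mul_sub_mem (ha : ∀ i < p, D^[i] a ∈ P) (hb : ∀ l < q, D^[l] b ∈ P) :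
    D^[p + q] (a * b) - (p + q).choose p • (D^[p] a * D^[q] b) ∈ P := by
  have hpq : (p, q) ∈ antidiagonal (p + q) := mem_antidiagonal.2 rfl
  rw [iterate_apply_mul, ← add_sum_erase _ _ hpq, add_sub_cancel_left]
  refine P.sum_mem fun ij hij => D.choose_smul_iterate_mul_mem ha hb _ ?_
  obtain ⟨hne, hij⟩ := mem_erase.1 hij
  have := mem_antidiagonal.1 hij
  have : ij.1 ≠ p := fun h => hne (Prod.ext h (by simp only; omega))
  omega

theorem iterate_apply_pow_mem_and_sub_mem {x : A} {j : ℕ} (hx : ∀ i < j, D^[i] x ∈ P) (e : ℕ) :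
    (∀ n < j * e, D^[n] (x ^ e) ∈ P) ∧
      ∃ c : ℕ, c ≠ 0 ∧ D^[j * e] (x ^ e) - c • (D^[j] x) ^ e ∈ P := by
  induction e with
  | zero => exact ⟨by simp, 1, one_ne_zero, by simp⟩
  | succ e ih =>
    obtain ⟨hlt, c, hc, hlead⟩ := ih
    rw [pow_succ, Nat.mul_succ]
    refine ⟨fun n hn => D.iterate_apply_mul_mem hlt hx hn,
      (j * e + j).choose (j * e) * c, mul_ne_zero (Nat.choose_pos (by omega)).ne' hc, ?_⟩
    have hmul := P.mul_mem_right ((j * e + j).choose (j * e) • D^[j] x) hlead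
    convert P.add_mem (D.iterate_apply_mul_sub_mem hlt hx) hmul using 1
    simp only [nsmul_eq_mul, Nat.cast_mul, pow_succ]
    ring

end CommRing

end Derivation

theorem stmt_6_general (R : Type*) [CommRing R] [Algebra ℚ R]
    (δ : Derivation ℚ R R) (g : R) (ε k : ℕ)
    (J : Ideal R) (hg : g ^ ε ∈ J) :
    ∀ j ≤ k, (⇑δ)^[j] g ∈
      (Ideal.span {r : R | ∃ h ∈ J, ∃ m ≤ k * ε, r = (⇑δ)^[m] h}).radical := by
  set P := (Ideal.span {r : R | ∃ h ∈ J, ∃ m ≤ k * ε, r = (⇑δ)^[m] h}).radical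
  intro j
  induction j using Nat.strong_induction_on with
  | _ j ih =>
    intro hjk
    obtain ⟨-, c, hc, hlead⟩ :=
      δ.iterate_apply_pow_mem_and_sub_mem (fun i hi => ih i hi (hi.le.trans hjk)) ε
    have hspan : (⇑δ)^[j * ε] (g ^ ε) ∈ P :=
      Ideal.le_radical (Ideal.subset_span ⟨g ^ ε, hg, j * ε, Nat.mul_le_mul_right ε hjk, rfl⟩)
    have hc : IsUnit (c : R) := by
      simpa using (isUnit_iff_ne_zero.2 (Nat.cast_ne_zero.2 hc : (c : ℚ) ≠ 0)).map (algebraMap ℚ R)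
    have hpow : ((⇑δ)^[j] g) ^ ε ∈ P := by
      rw [← P.unit_mul_mem_iff_mem hc, ← nsmul_eq_mul]
      simpa only [sub_sub_cancel] using P.sub_mem hspan hlead
    exact Ideal.radical_isRadical _ ⟨ε, hpow⟩

/-- if `g^ε ∈ J` for an ideal `J` of a commutative ℚ-algebra with
derivation `δ`, then for all `0 ≤ j ≤ k`, `δ^[j] g` lies in the radical of the
ideal generated by `δ^[m] h` for `h ∈ J` and `0 ≤ m ≤ kε`. -/
theorem stmt_6 (R : Type*) [CommRing R] [Algebra ℚ R]
    (δ : Derivation ℚ R R) (g : R) (ε k : ℕ) (hε : 1 ≤ ε)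
    (J : Ideal R) (hg : g ^ ε ∈ J) :
    ∀ j ≤ k, (⇑δ)^[j] g ∈
      (Ideal.span {r : R | ∃ h ∈ J, ∃ m ≤ k * ε, r = (⇑δ)^[m] h}).radical :=
  stmt_6_general R δ g ε k J hg
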